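/- For every d ≥ 1, κ_{d,1} = 0, and κ_{d,α} > 0 whenever α ∈ (0,2) and α ≠ 1, where κ_{d,α} = [π^{(d−1)/2} Γ((1+α)/2) / Γ((α+d)/2)] · [B((1+α)/2, (2−α)/2) − 2^α] / (α 2^α). -/

import Mathlib

open MeasureTheory Real Set

/-- The Euler beta function. -/
noncomputable def eulerBeta (a b : ℝ) : ℝ := Real.Gamma a * Real.Gamma b / Real.Gamma (a + b)

/-- The optimal fractional Hardy constant for the half-space in dimension `d`. -/
noncomputable def kappa (d : ℕ) (α : ℝ) : ℝ :=
  (Real.pi ^ (((d : ℝ) - 1) / 2) * Real.Gamma ((1 + α) / 2) / Real.Gamma ((α + d) / 2)) *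
    ((eulerBeta ((1 + α) / 2) ((2 - α) / 2) - 2 ^ α) / (α * 2 ^ α))

/-!
With `x = (1 + α)/2` and `y = (2 - α)/2` we have `x + y = 3/2`, so
`B(x, y) / 2^α = Γ(x) Γ(y) / (Γ(3/2) 2^α)`, whose logarithm is, up to a constant, the strictly
convex function `α ↦ log Γ(x) + log Γ(y) - α log 2` on `(-1, 2)`. Its derivative at `α = 1`
is `(ψ(1) - ψ(1/2))/2 - log 2 = 0`, so `α = 1` is its unique minimum, where `B(1, 1/2) = 2`.
Hence `B(x, y) > 2^α` for `α ≠ 1`, and all other factors of `κ_{d,α}` are positive.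
-/

theorem StrictConvexOn.comp_mul_add {s : Set ℝ} {f : ℝ → ℝ} (hf : StrictConvexOn ℝ s f)
    {a : ℝ} (ha : a ≠ 0) (b : ℝ) :
    StrictConvexOn ℝ ((a * · + b) ⁻¹' s) (fun x ↦ f (a * x + b)) := by
  have combo {x y μ ν : ℝ} (h : μ + ν = 1) :
      a * (μ * x + ν * y) + b = μ * (a * x + b) + ν * (a * y + b) := by
    linear_combination (-b) * h
  refine ⟨fun x hx y hy μ ν hμ hν hμν ↦ ?_, fun x hx y hy hxy μ ν hμ hν hμν ↦ ?_⟩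
  · simpa only [mem_preimage, smul_eq_mul, combo hμν] using hf.1 hx hy hμ hν hμν
  · have hne : a * x + b ≠ a * y + b := by simpa [ha] using hxy
    simpa only [smul_eq_mul, combo hμν] using hf.2 hx hy hne hμ hν hμν

theorem StrictConvexOn.lt_of_hasDerivAt_eq_zero {S : Set ℝ} {f : ℝ → ℝ} {x y : ℝ}
    (hf : StrictConvexOn ℝ S f) (hx : x ∈ interior S) (hy : y ∈ S) (hxy : x ≠ y)
    (hf' : HasDerivAt f 0 x) : f x < f y := by
  have hmin : IsMinOn f S x := hf.convexOn.isMinOn_of_rightDeriv_eq_zero hx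
    (hf'.hasDerivWithinAt.derivWithin (uniqueDiffWithinAt_Ioi x))
  refine (hmin hy).lt_of_ne fun hfxy ↦ hxy ?_
  exact hf.eq_of_isMinOn hmin (fun z hz ↦ hfxy ▸ hmin hz) (interior_subset hx) hy

theorem Real.strictConvexOn_log_Gamma : StrictConvexOn ℝ (Ioi 0) (log ∘ Gamma) := by
  -- `log Γ x = log Γ (x + 1) - log x`, and `-log` is strictly convex
  have hshift : ConvexOn ℝ (Ioi 0) (fun x ↦ log (Gamma (x + 1))) := by
    have hsub : Ioi (0:ℝ) ⊆ (fun z ↦ 1 + z) ⁻¹' Ioi 0 := fun x hx ↦ by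
      simp only [mem_preimage, mem_Ioi] at hx ⊢; linarith
    exact ((convexOn_log_Gamma.translate_right 1).subset hsub (convex_Ioi 0)).congr
      fun x _ ↦ by simp [add_comm]
  refine (hshift.add_strictConvexOn strictConcaveOn_log_Ioi.neg).congr fun x (hx : 0 < x) ↦ ?_
  simp [Gamma_add_one hx.ne', log_mul hx.ne' (Gamma_pos_of_pos hx).ne']

theorem Real.Gamma_three_halves : Gamma (3 / 2) = √π / 2 := by
  rw [show (3 / 2 : ℝ) = 1 / 2 + 1 by norm_num, Gamma_add_one (by norm_num), Gamma_one_half_eq]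
  ring

/-- `log (Γ(3/2) · B((1 + α)/2, (2 - α)/2) / 2^α)`. -/
noncomputable def logBetaRatio (α : ℝ) : ℝ :=
  log (Gamma ((1 + α) / 2)) + log (Gamma ((2 - α) / 2)) - α * log 2

theorem strictConvexOn_logBetaRatio : StrictConvexOn ℝ (Ioo (-1) 2) logBetaRatio := by
  have h₁ := strictConvexOn_log_Gamma.comp_mul_add (a := 1 / 2) (by norm_num) (1 / 2)
  have h₂ := strictConvexOn_log_Gamma.comp_mul_add (a := -(1 / 2)) (by norm_num) 1
  have hsub₁ : Ioo (-1 : ℝ) 2 ⊆ (1 / 2 * · + 1 / 2) ⁻¹' Ioi 0 := fun x hx ↦ by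
    simp only [mem_preimage, mem_Ioi]; linarith [hx.1]
  have hsub₂ : Ioo (-1 : ℝ) 2 ⊆ (-(1 / 2) * · + 1) ⁻¹' Ioi 0 := fun x hx ↦ by
    simp only [mem_preimage, mem_Ioi]; linarith [hx.2]
  have hlin : ConcaveOn ℝ (Ioo (-1) 2) (fun x ↦ log 2 * x) :=
    (concaveOn_id (convex_Ioo _ _)).smul (log_pos one_lt_two).le
  refine (((h₁.subset hsub₁ (convex_Ioo _ _)).add
    (h₂.subset hsub₂ (convex_Ioo _ _))).sub_concaveOn hlin).congr fun x _ ↦ ?_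
  simp only [Pi.add_apply, Pi.sub_apply, Function.comp_apply, logBetaRatio]
  rw [show 1 / 2 * x + 1 / 2 = (1 + x) / 2 by ring, show -(1 / 2) * x + 1 = (2 - x) / 2 by ring]
  ring

theorem hasDerivAt_logBetaRatio_one : HasDerivAt logBetaRatio 0 1 := by
  have hΓ₁ :
      HasDerivAt (fun α ↦ Gamma ((1 + α) / 2)) (-eulerMascheroniConstant * (1 / 2)) 1 := by
    have hΓ : HasDerivAt Gamma (-eulerMascheroniConstant) ((1 + 1) / 2) := by
      rw [show ((1 : ℝ) + 1) / 2 = 1 by norm_num]; exact hasDerivAt_Gamma_one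
    exact hΓ.comp 1 (((hasDerivAt_id' (1 : ℝ)).const_add 1).div_const 2)
  have hΓ₂ : HasDerivAt (fun α ↦ Gamma ((2 - α) / 2))
      (-√π * (eulerMascheroniConstant + 2 * log 2) * (-1 / 2)) 1 := by
    have hΓ : HasDerivAt Gamma (-√π * (eulerMascheroniConstant + 2 * log 2)) ((2 - 1) / 2) := by
      rw [show ((2 : ℝ) - 1) / 2 = 1 / 2 by norm_num]; exact hasDerivAt_Gamma_one_half
    exact hΓ.comp 1 (((hasDerivAt_id' (1 : ℝ)).const_sub 2).div_const 2)
  have hlin : HasDerivAt (fun α : ℝ ↦ α * log 2) (log 2) 1 := by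
    simpa using (hasDerivAt_id (1 : ℝ)).mul_const (log 2)
  have h := ((hΓ₁.log (by norm_num)).add (hΓ₂.log (by norm_num; positivity))).sub hlin
  refine HasDerivAt.congr_deriv (f := logBetaRatio) h ?_
  norm_num [Gamma_one, Gamma_one_half_eq]
  field_simp
  ring

theorem logBetaRatio_one_lt {α : ℝ} (hα : α ∈ Ioo (-1) 2) (hα₁ : α ≠ 1) :
    logBetaRatio 1 < logBetaRatio α := by
  refine strictConvexOn_logBetaRatio.lt_of_hasDerivAt_eq_zero ?_ hα hα₁.symm
    hasDerivAt_logBetaRatio_one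
  rw [interior_Ioo]
  norm_num

theorem eulerBeta_eq_two_rpow_mul_exp {α : ℝ} (hα : α ∈ Ioo (-1) 2) :
    eulerBeta ((1 + α) / 2) ((2 - α) / 2) = 2 ^ α * exp (logBetaRatio α - logBetaRatio 1) := by
  obtain ⟨h₁, h₂⟩ := hα
  have hΓ₁ : 0 < Gamma ((1 + α) / 2) := Gamma_pos_of_pos (by linarith)
  have hΓ₂ : 0 < Gamma ((2 - α) / 2) := Gamma_pos_of_pos (by linarith)
  have hsum : (1 + α) / 2 + (2 - α) / 2 = 3 / 2 := by ring
  have hone : logBetaRatio 1 = log (√π / 2) := by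
    norm_num [logBetaRatio, Gamma_one, Gamma_one_half_eq, log_div (sqrt_pos.2 pi_pos).ne']
  rw [eulerBeta, hsum, Gamma_three_halves, hone, logBetaRatio, exp_sub, exp_sub, exp_add,
    exp_log hΓ₁, exp_log hΓ₂, exp_log (by positivity), ← log_rpow two_pos,
    exp_log (by positivity)]
  field_simp

theorem two_rpow_lt_eulerBeta {α : ℝ} (hα : α ∈ Ioo (-1) 2) (hα₁ : α ≠ 1) :
    2 ^ α < eulerBeta ((1 + α) / 2) ((2 - α) / 2) := by
  rw [eulerBeta_eq_two_rpow_mul_exp hα]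
  exact lt_mul_of_one_lt_right (by positivity)
    (one_lt_exp_iff.2 (sub_pos.2 (logBetaRatio_one_lt hα hα₁)))

theorem kappa_zero_iff_alpha_one_general (d : ℕ) :
    kappa d 1 = 0 ∧ ∀ α : ℝ, 0 < α → α < 2 → α ≠ 1 → 0 < kappa d α := by
  refine ⟨?_, fun α h₀ h₂ h₁ ↦ ?_⟩
  · rw [kappa, eulerBeta_eq_two_rpow_mul_exp (by norm_num), sub_self, exp_zero]
    simp
  · have hβ := two_rpow_lt_eulerBeta ⟨by linarith, h₂⟩ h₁
    exact mul_pos (by positivity) (div_pos (sub_pos.2 hβ) (by positivity))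

theorem kappa_zero_iff_alpha_one (d : ℕ) (hd : 1 ≤ d) :
    kappa d 1 = 0 ∧ ∀ α : ℝ, 0 < α → α < 2 → α ≠ 1 → 0 < kappa d α :=
  kappa_zero_iff_alpha_one_general d
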